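/- Let P be a local Markov chain with stationary distribution μ (μP = μ), where μ is the Gibbs distribution. Then for every Λ ⊆ V, the marginal μ_{Λ̄} of μ on Σ^{Λ̄} belongs to LP_{Λ,MC}; consequently, for every f supported on Λ, min{ν(f) : ν ∈ LP_{Λ,MC}} ≤ μ(f) ≤ max{ν(f) : ν ∈ LP_{Λ,MC}}. -/

import Mathlib

namespace GibbsLP

variable {V : Type*} [Fintype V] [DecidableEq V]

/-- Spin configurations on the vertex set `V`; the two spin values `-1, +1` are
encoded by the two-element type `Bool`. -/
abbrev Config (V : Type*) := V → Bool

/-- The configuration `x` with the spin at site `i` flipped (denoted `xⁱ` in the paper). -/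
def flip (x : Config V) (i : V) : Config V := Function.update x i (!x i)

/-- Discrete gradient `∇ᵢ f (x) = f(xⁱ) - f(x)`. -/
def grad (f : Config V → ℝ) (i : V) (x : Config V) : ℝ := f (flip x i) - f x

/-- `f` depends only on the spins in `Λ`, i.e. `supp f ⊆ Λ`. -/
def SupportedOn (f : Config V → ℝ) (Λ : Set V) : Prop :=
  ∀ i ∉ Λ, ∀ x, f (flip x i) = f x

/-- The support `supp f = {i : ∇ᵢ f ≠ 0}` of an observable. -/
def sptSet (f : Config V → ℝ) : Set V := {i | ∃ x, f (flip x i) ≠ f x}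

/-- Sup norm of an observable. -/
noncomputable def supNorm {α : Type*} (f : α → ℝ) : ℝ := ⨆ x, |f x|

/-- The Hamiltonian `H(x) = β ∑_{{i,j} ∈ E} h_{ij}(x_i, x_j)`; each unordered edge is
counted once (hence the factor `1/2` for the ordered double sum). -/
noncomputable def ham (G : SimpleGraph V) [DecidableRel G.Adj] (β : ℝ)
    (h : V → V → Bool → Bool → ℝ) (x : Config V) : ℝ :=
  β * ((1 : ℝ) / 2 * ∑ i : V, ∑ j : V, if G.Adj i j then h i j (x i) (x j) else 0)

/-- The Gibbs distribution `μ(x) = e^{-H(x)} / Z`. -/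
noncomputable def gibbs (H : Config V → ℝ) (x : Config V) : ℝ :=
  Real.exp (-H x) / ∑ y : Config V, Real.exp (-H y)

/-- `ν` is a probability distribution. -/
def IsDist {α : Type*} [Fintype α] (ν : α → ℝ) : Prop :=
  (∀ a, 0 ≤ ν a) ∧ ∑ a, ν a = 1

/-- Spin configurations on a subset `A ⊆ V`. -/
abbrev SubConfig {V : Type*} (A : Finset V) := {i : V // i ∈ A} → Bool

/-- Restriction of a configuration to `A`. -/
def restrict (A : Finset V) (x : Config V) : SubConfig A := fun i => x i.1

/-- Extension of a configuration on `A` to all of `V` (by an arbitrary fixed value outside). -/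
def extendC (A : Finset V) (y : SubConfig A) : Config V :=
  fun i => if h : i ∈ A then y ⟨i, h⟩ else true

/-- Flip the spin of `y : SubConfig A` at site `i` (identity if `i ∉ A`). -/
def flipAt (A : Finset V) (y : SubConfig A) (i : V) : SubConfig A :=
  fun j => if j.1 = i then !(y j) else y j

/-- External boundary `∂ᵉˣ Λ = {j ∉ Λ : ∃ i ∈ Λ, {i,j} ∈ E}`. -/
def extBoundary (G : SimpleGraph V) [DecidableRel G.Adj] (Λ : Finset V) : Finset V :=
  Finset.univ.filter fun j => j ∉ Λ ∧ ∃ i ∈ Λ, G.Adj i j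

/-- External boundary of a set of vertices (set version). -/
def extBoundarySet (G : SimpleGraph V) (A : Set V) : Set V :=
  {j | j ∉ A ∧ ∃ i ∈ A, G.Adj i j}

/-- `Λ̄ = Λ ∪ ∂ᵉˣ Λ`. -/
def closure (G : SimpleGraph V) [DecidableRel G.Adj] (Λ : Finset V) : Finset V :=
  Λ ∪ extBoundary G Λ

/-- `∇ᵢ H` evaluated on a configuration on `A` (well defined for `i ∈ Λ`, `A = Λ̄`, since
then `∇ᵢ H` only depends on the spins in `Λ̄`). -/
noncomputable def gradH (A : Finset V) (H : Config V → ℝ) (i : V) (y : SubConfig A) : ℝ :=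
  H (flip (extendC A y) i) - H (extendC A y)

/-- Expectation `ν(f)` of an observable `f` supported in `A` under a distribution `ν` on
`Σ^A`. -/
noncomputable def lexp {A : Finset V} (ν : SubConfig A → ℝ) (f : Config V → ℝ) : ℝ :=
  ∑ y : SubConfig A, ν y * f (extendC A y)

/-- The DLR linear program: distributions on `Σ^{Λ̄}` satisfying the local spin-flip
equations `ν(y) = ν(yⁱ) e^{∇ᵢH(y)}` for all `y` and `i ∈ Λ`. -/
def LPdlr (G : SimpleGraph V) [DecidableRel G.Adj] (H : Config V → ℝ) (Λ : Finset V) :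
    Set (SubConfig (closure G Λ) → ℝ) :=
  {ν | IsDist ν ∧ ∀ y, ∀ i ∈ Λ,
      ν y = ν (flipAt (closure G Λ) y i) * Real.exp (gradH (closure G Λ) H i y)}

/-- Values `ν(f)` over feasible points `ν` of the DLR linear program. -/
def dlrVals (G : SimpleGraph V) [DecidableRel G.Adj] (H : Config V → ℝ) (Λ : Finset V)
    (f : Config V → ℝ) : Set ℝ :=
  {t | ∃ ν ∈ LPdlr G H Λ, t = lexp ν f}

/-- Marginal of a distribution `μ` on `Σ^V` on the sites in `A`. -/
noncomputable def marg (A : Finset V) (μ : Config V → ℝ) : SubConfig A → ℝ :=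
  fun y => ∑ x : Config V, if restrict A x = y then μ x else 0

/-- The Hamiltonian truncated to `Λ` with boundary condition `η` on `∂ᵉˣ Λ`. -/
noncomputable def hamLoc (G : SimpleGraph V) [DecidableRel G.Adj] (β : ℝ)
    (h : V → V → Bool → Bool → ℝ) (Λ : Finset V)
    (η : SubConfig (extBoundary G Λ)) (x : SubConfig Λ) : ℝ :=
  β * ((1 : ℝ) / 2 * (∑ i ∈ Λ.attach, ∑ j ∈ Λ.attach,
        if G.Adj i.1 j.1 then h i.1 j.1 (x i) (x j) else 0)
    + ∑ i ∈ Λ.attach, ∑ j ∈ (extBoundary G Λ).attach,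
        if G.Adj i.1 j.1 then h i.1 j.1 (x i) (η j) else 0)

/-- The local Gibbs state `μ_Λ^η` on `Λ` with boundary condition `η`. -/
noncomputable def gibbsLoc (G : SimpleGraph V) [DecidableRel G.Adj] (β : ℝ)
    (h : V → V → Bool → Bool → ℝ) (Λ : Finset V)
    (η : SubConfig (extBoundary G Λ)) (x : SubConfig Λ) : ℝ :=
  Real.exp (-(hamLoc G β h Λ η x)) /
    ∑ x' : SubConfig Λ, Real.exp (-(hamLoc G β h Λ η x'))

/-- Expectation `μ_Λ^η(f)` of an observable supported in `Λ` under the local Gibbs state. -/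
noncomputable def gibbsLocExp (G : SimpleGraph V) [DecidableRel G.Adj] (β : ℝ)
    (h : V → V → Bool → Bool → ℝ) (Λ : Finset V)
    (η : SubConfig (extBoundary G Λ)) (f : Config V → ℝ) : ℝ :=
  ∑ x : SubConfig Λ, gibbsLoc G β h Λ η x * f (extendC Λ x)

/-- Combine `x ∈ Σ^Λ` and `η ∈ Σ^{∂ᵉˣΛ}` into a configuration `(x, η) ∈ Σ^{Λ̄}`. -/
def glue (G : SimpleGraph V) [DecidableRel G.Adj] (Λ : Finset V)
    (x : SubConfig Λ) (η : SubConfig (extBoundary G Λ)) : SubConfig (closure G Λ) :=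
  fun i => if h : i.1 ∈ Λ then x ⟨i.1, h⟩
    else η ⟨i.1, by
      have hi := i.2
      simp only [closure, Finset.mem_union] at hi
      tauto⟩

/-- A local (single-site, finite-range, bounded-rate) Markov chain on `Σ^V`. -/
structure IsLocalMC (G : SimpleGraph V) (P : Config V → Config V → ℝ) : Prop where
  nonneg : ∀ x x', 0 ≤ P x x'
  rowSum : ∀ x, ∑ x', P x x' = 1
  /-- `P_{x,x'} = 0` if `x'` differs from `x` on more than one site. -/
  singleSite : ∀ x x', x' ≠ x → (∀ i, x' ≠ flip x i) → P x x' = 0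
  /-- `P_{x,xⁱ}` only depends on the spins in the closed neighborhood of `i`. -/
  locality : ∀ i : V, ∀ x x' : Config V, x i = x' i →
      (∀ j, G.Adj i j → x j = x' j) → P x (flip x i) = P x' (flip x' i)
  /-- `P_{x,x'} ≤ 1/n` off the diagonal. -/
  bounded : ∀ x x', x ≠ x' → P x x' ≤ 1 / (Fintype.card V : ℝ)

/-- The Markov-chain linear program: distributions on `Σ^{Λ̄}` satisfying the stationarity
equations `ν(Pg) = ν(g)` for all `g` supported on `Λ`. -/
def LPmc (G : SimpleGraph V) [DecidableRel G.Adj] (P : Config V → Config V → ℝ)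
    (Λ : Finset V) : Set (SubConfig (closure G Λ) → ℝ) :=
  {ν | IsDist ν ∧ ∀ g : Config V → ℝ, SupportedOn g ↑Λ →
      lexp ν ((Matrix.of P).mulVec g) = lexp ν g}

/-- Values `ν(f)` over feasible points `ν` of the Markov-chain linear program. -/
def mcVals (G : SimpleGraph V) [DecidableRel G.Adj] (P : Config V → Config V → ℝ)
    (Λ : Finset V) (f : Config V → ℝ) : Set ℝ :=
  {t | ∃ ν ∈ LPmc G P Λ, t = lexp ν f}

/-- The heat-bath dynamics: site `i` is flipped with probability
`c(i,x) = e^{-∇ᵢH(x)} / (1 + e^{-∇ᵢH(x)})`, each site being selected with probability `1/n`. -/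
noncomputable def heatBath (H : Config V → ℝ) (x x' : Config V) : ℝ :=
  if x' = x then
    1 - (∑ i : V, Real.exp (-(grad H i x)) / (1 + Real.exp (-(grad H i x)))) /
      (Fintype.card V : ℝ)
  else
    ∑ i : V, if x' = flip x i then
      (Real.exp (-(grad H i x)) / (1 + Real.exp (-(grad H i x)))) / (Fintype.card V : ℝ)
    else 0

/-- Marginal on `Σ^A` of a distribution on `Σ^B`, for `A ⊆ B`. -/
noncomputable def margTo {A B : Finset V} (hAB : A ⊆ B) (ν : SubConfig B → ℝ) :
    SubConfig A → ℝ :=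
  fun z => ∑ y : SubConfig B,
    if (fun i : {i : V // i ∈ A} => y ⟨i.1, hAB i.2⟩) = z then ν y else 0

theorem closure_mono (G : SimpleGraph V) [DecidableRel G.Adj] {Λ Λ' : Finset V}
    (hs : Λ ⊆ Λ') : closure G Λ ⊆ closure G Λ' := by
  intro j hj
  simp only [closure, Finset.mem_union, extBoundary, Finset.mem_filter, Finset.mem_univ,
    true_and] at hj ⊢
  by_cases hjΛ' : j ∈ Λ'
  · exact Or.inl hjΛ'
  · rcases hj with hj | ⟨hjn, i, hiΛ, hadj⟩
    · exact absurd (hs hj) hjΛ'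
    · exact Or.inr ⟨hjΛ', i, hs hiΛ, hadj⟩

/-!
Stationarity `μP = μ` gives `μ(Pg) = μ(g)` for every observable `g`. If `g` depends only on
the spins in `Λ`, then `Pg(x) = g(x) + ∑ⱼ P_{x,xʲ} (g(xʲ) - g(x))` only involves sites `j ∈ Λ`
(the other terms vanish), and by locality their rates depend only on the spins in `Λ̄`; so
both `g` and `Pg` are supported on `Λ̄`, where `μ` and its marginal `μ_{Λ̄}` give the same
expectations. The sandwich follows because `μ(f)` is one of the values `ν(f)`, all of which
lie in `[-C, C]` with `C = ∑_y |f(y)|`.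
-/

omit [Fintype V] in
lemma flip_apply_self (x : Config V) (i : V) : flip x i i = !x i := by
  simp [flip]

omit [Fintype V] in
lemma flip_apply_of_ne (x : Config V) {i j : V} (hji : j ≠ i) : flip x i j = x j :=
  Function.update_of_ne hji _ _

omit [Fintype V] in
lemma flip_flip_comm (x : Config V) (i j : V) : flip (flip x i) j = flip (flip x j) i := by
  by_cases hij : i = j
  · rw [hij]
  · unfold flip
    rw [Function.update_of_ne (Ne.symm hij), Function.update_of_ne hij,
      Function.update_comm hij]

omit [Fintype V] in
lemma flip_injective (x : Config V) : Function.Injective (flip x) := by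
  intro i j hij
  by_contra hne
  have hi := congrFun hij i
  rw [flip_apply_self, flip_apply_of_ne x hne] at hi
  exact Bool.not_ne_self (x i) hi

namespace SupportedOn

variable {f : Config V → ℝ} {A : Set V}

omit [Fintype V] in
lemma mono {B : Set V} (hAB : A ⊆ B) (hf : SupportedOn f A) : SupportedOn f B :=
  fun i hi => hf i fun hiA => hi (hAB hiA)

lemma apply_eq_of_eqOn (hf : SupportedOn f A) {x x' : Config V}
    (hxx : ∀ i ∈ A, x i = x' i) : f x = f x' := by
  suffices key : ∀ (s : Finset V) (x : Config V),
      (∀ i, x i ≠ x' i → i ∈ s ∧ i ∉ A) → f x = f x' from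
    key Finset.univ x fun i hi => ⟨Finset.mem_univ i, fun hiA => hi (hxx i hiA)⟩
  intro s
  induction s using Finset.induction_on with
  | empty =>
    intro x hdiff
    congr 1
    funext i
    by_contra hne
    simpa using (hdiff i hne).1
  | insert a s _ ih =>
    intro x hdiff
    by_cases hxa : x a = x' a
    · refine ih x fun i hi => ⟨?_, (hdiff i hi).2⟩
      rcases Finset.mem_insert.mp (hdiff i hi).1 with rfl | his
      · exact absurd hxa hi
      · exact his
    · -- flipping the site `a ∉ A` does not change `f` and removes `a` from the disagreement set
      rw [← hf a (hdiff a hxa).2 x]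
      refine ih (flip x a) fun i hi => ?_
      by_cases hia : i = a
      · subst hia
        rw [flip_apply_self] at hi
        exact absurd (Bool.eq_not.mpr (Ne.symm hxa)).symm hi
      · rw [flip_apply_of_ne x hia] at hi
        exact ⟨(Finset.mem_insert.mp (hdiff i hi).1).resolve_left hia, (hdiff i hi).2⟩

lemma apply_extendC_restrict {A : Finset V} (hf : SupportedOn f ↑A) (x : Config V) :
    f (extendC A (restrict A x)) = f x :=
  hf.apply_eq_of_eqOn fun i hi => by simp [extendC, restrict, Finset.mem_coe.mp hi]

end SupportedOn

lemma lexp_marg {A : Finset V} {f : Config V → ℝ} (hf : SupportedOn f ↑A)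
    (μ : Config V → ℝ) : lexp (marg A μ) f = ∑ x, μ x * f x := by
  unfold lexp marg
  simp_rw [Finset.sum_mul, ite_mul, zero_mul]
  rw [Finset.sum_comm]
  refine Finset.sum_congr rfl fun x _ => ?_
  rw [Finset.sum_ite_eq, if_pos (Finset.mem_univ _), hf.apply_extendC_restrict x]

lemma sum_marg (A : Finset V) (μ : Config V → ℝ) : ∑ y, marg A μ y = ∑ x, μ x := by
  unfold marg
  rw [Finset.sum_comm]
  refine Finset.sum_congr rfl fun x _ => ?_
  rw [Finset.sum_ite_eq, if_pos (Finset.mem_univ _)]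

lemma IsDist.marg {μ : Config V → ℝ} (hμ : IsDist μ) (A : Finset V) : IsDist (marg A μ) :=
  ⟨fun _ => Finset.sum_nonneg fun x _ => ite_nonneg (hμ.1 x) le_rfl,
    (sum_marg A μ).trans hμ.2⟩

omit [Fintype V] in
lemma IsDist.abs_lexp_le {A : Finset V} {ν : SubConfig A → ℝ} (hν : IsDist ν)
    (f : Config V → ℝ) : |lexp ν f| ≤ ∑ y, |f (extendC A y)| := by
  calc |lexp ν f| ≤ ∑ y, |ν y * f (extendC A y)| := Finset.abs_sum_le_sum_abs _ _
    _ ≤ ∑ y, |f (extendC A y)| := by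
      refine Finset.sum_le_sum fun y _ => ?_
      have hνy : ν y ≤ 1 := hν.2 ▸ Finset.single_le_sum (fun z _ => hν.1 z) (Finset.mem_univ y)
      rw [abs_mul, abs_of_nonneg (hν.1 y)]
      exact mul_le_of_le_one_left (abs_nonneg _) hνy

lemma isDist_gibbs (H : Config V → ℝ) : IsDist (gibbs H) := by
  refine ⟨fun x => div_nonneg (Real.exp_nonneg _)
    (Finset.sum_nonneg fun _ _ => (Real.exp_pos _).le), ?_⟩
  unfold gibbs
  rw [← Finset.sum_div]
  exact div_self (Finset.sum_pos (fun y _ => Real.exp_pos _) Finset.univ_nonempty).ne'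

lemma sum_mul_mulVec_of_stationary {μ : Config V → ℝ} {P : Config V → Config V → ℝ}
    (hstat : ∀ x', ∑ x, μ x * P x x' = μ x') (g : Config V → ℝ) :
    ∑ x, μ x * (Matrix.of P).mulVec g x = ∑ x, μ x * g x := by
  have hvecMul : Matrix.vecMul μ (Matrix.of P) = μ := funext hstat
  calc ∑ x, μ x * (Matrix.of P).mulVec g x = μ ⬝ᵥ (Matrix.of P).mulVec g := rfl
    _ = ∑ x, μ x * g x := by rw [Matrix.dotProduct_mulVec, hvecMul]; rfl

namespace IsLocalMC

variable {G : SimpleGraph V} {P : Config V → Config V → ℝ}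

lemma mulVec_eq_add_sum_flip (hP : IsLocalMC G P) (g : Config V → ℝ) (x : Config V) :
    (Matrix.of P).mulVec g x = g x + ∑ j, P x (flip x j) * (g (flip x j) - g x) := by
  have hsupp : ∑ x' ∈ Finset.univ.image (flip x), P x x' * (g x' - g x)
      = ∑ x', P x x' * (g x' - g x) := by
    refine Finset.sum_subset (Finset.subset_univ _) fun x' _ hx' => ?_
    by_cases hxx : x' = x
    · rw [hxx, sub_self, mul_zero]
    · rw [hP.singleSite x x' hxx fun j hj =>
        hx' (hj ▸ Finset.mem_image_of_mem _ (Finset.mem_univ j)), zero_mul]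
  calc (Matrix.of P).mulVec g x = ∑ x', P x x' * g x' := rfl
    _ = (∑ x', P x x') * g x + ∑ x', P x x' * (g x' - g x) := by
      rw [Finset.sum_mul, ← Finset.sum_add_distrib]
      exact Finset.sum_congr rfl fun x' _ => by ring
    _ = g x + ∑ j, P x (flip x j) * (g (flip x j) - g x) := by
      rw [hP.rowSum x, one_mul, ← hsupp,
        Finset.sum_image fun i _ j _ hij => flip_injective x hij]

lemma supportedOn_mulVec [DecidableRel G.Adj] (hP : IsLocalMC G P) {g : Config V → ℝ}
    {Λ : Finset V} (hg : SupportedOn g ↑Λ) :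
    SupportedOn ((Matrix.of P).mulVec g) ↑(closure G Λ) := by
  intro i hi x
  have hiΛ : i ∉ Λ := fun hiΛ => hi (Finset.mem_union_left _ hiΛ)
  have hnotAdj : ∀ j ∈ Λ, ¬ G.Adj j i := fun j hj hadj => hi <| Finset.mem_union_right _ <| by
    simpa [extBoundary] using ⟨hiΛ, j, hj, hadj⟩
  rw [hP.mulVec_eq_add_sum_flip, hP.mulVec_eq_add_sum_flip, hg i hiΛ x]
  congr 1
  refine Finset.sum_congr rfl fun j _ => ?_
  by_cases hjΛ : j ∈ Λ
  · have hij : i ≠ j := fun hij => hiΛ (hij ▸ hjΛ)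
    -- `i` lies outside the closed neighbourhood of `j`, so flipping it leaves the rate unchanged
    have hrate : P (flip x i) (flip (flip x i) j) = P x (flip x j) :=
      hP.locality j _ _ (flip_apply_of_ne x hij.symm) fun k hadj =>
        flip_apply_of_ne x fun hki => hnotAdj j hjΛ (hki ▸ hadj)
    rw [hrate, flip_flip_comm, hg i hiΛ]
  · rw [hg j hjΛ, hg j hjΛ, hg i hiΛ, sub_self, mul_zero, mul_zero]

end IsLocalMC

lemma coe_subset_closure (G : SimpleGraph V) [DecidableRel G.Adj] (Λ : Finset V) :
    (Λ : Set V) ⊆ closure G Λ :=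
  Finset.coe_subset.mpr Finset.subset_union_left

lemma marg_mem_LPmc_of_stationary {G : SimpleGraph V} [DecidableRel G.Adj]
    {P : Config V → Config V → ℝ} (hP : IsLocalMC G P) {μ : Config V → ℝ} (hμ : IsDist μ)
    (hstat : ∀ x', ∑ x, μ x * P x x' = μ x') (Λ : Finset V) :
    marg (closure G Λ) μ ∈ LPmc G P Λ := by
  refine ⟨hμ.marg _, fun g hg => ?_⟩
  rw [lexp_marg (hP.supportedOn_mulVec hg), lexp_marg (hg.mono (coe_subset_closure G Λ)),
    sum_mul_mulVec_of_stationary hstat]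

lemma mcVals_subset_Icc (G : SimpleGraph V) [DecidableRel G.Adj] (P : Config V → Config V → ℝ)
    (Λ : Finset V) (f : Config V → ℝ) :
    mcVals G P Λ f ⊆ Set.Icc (-∑ y, |f (extendC (closure G Λ) y)|)
      (∑ y, |f (extendC (closure G Λ) y)|) := by
  rintro t ⟨ν, ⟨hν, -⟩, rfl⟩
  exact abs_le.mp (hν.abs_lexp_le f)

theorem gibbs_marginal_mem_LPmc_general (G : SimpleGraph V) [DecidableRel G.Adj]
    (β : ℝ) (h : V → V → Bool → Bool → ℝ)
    (P : Config V → Config V → ℝ) (hP : IsLocalMC G P)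
    (hstat : ∀ x' : Config V,
      ∑ x : Config V, gibbs (ham G β h) x * P x x' = gibbs (ham G β h) x')
    (Λ : Finset V) :
    marg (closure G Λ) (gibbs (ham G β h)) ∈ LPmc G P Λ ∧
    ∀ f : Config V → ℝ, SupportedOn f ↑Λ →
      sInf (mcVals G P Λ f) ≤ ∑ x : Config V, gibbs (ham G β h) x * f x ∧
      ∑ x : Config V, gibbs (ham G β h) x * f x ≤ sSup (mcVals G P Λ f) := by
  have hmem := marg_mem_LPmc_of_stationary hP (isDist_gibbs _) hstat Λ
  refine ⟨hmem, fun f hf => ?_⟩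
  have hval : ∑ x, gibbs (ham G β h) x * f x ∈ mcVals G P Λ f :=
    ⟨_, hmem, (lexp_marg (hf.mono (coe_subset_closure G Λ)) _).symm⟩
  exact ⟨csInf_le (bddBelow_Icc.mono (mcVals_subset_Icc G P Λ f)) hval,
    le_csSup (bddAbove_Icc.mono (mcVals_subset_Icc G P Λ f)) hval⟩

/-- If `P` is a local Markov chain with stationary distribution the Gibbs
distribution `μ`, then the marginal of `μ` on `Σ^{Λ̄}` belongs to `LP_{Λ,MC}`;
consequently the MC linear program sandwiches `μ(f)` for every `f` supported on `Λ`. -/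
theorem gibbs_marginal_mem_LPmc (G : SimpleGraph V) [DecidableRel G.Adj]
    (β : ℝ) (hβ : 0 ≤ β) (h : V → V → Bool → Bool → ℝ)
    (hsym : ∀ i j a b, h i j a b = h i j b a) (hsym' : ∀ i j, h i j = h j i)
    (P : Config V → Config V → ℝ) (hP : IsLocalMC G P)
    (hstat : ∀ x' : Config V,
      ∑ x : Config V, gibbs (ham G β h) x * P x x' = gibbs (ham G β h) x')
    (Λ : Finset V) :
    marg (closure G Λ) (gibbs (ham G β h)) ∈ LPmc G P Λ ∧
    ∀ f : Config V → ℝ, SupportedOn f ↑Λ →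
      sInf (mcVals G P Λ f) ≤ ∑ x : Config V, gibbs (ham G β h) x * f x ∧
      ∑ x : Config V, gibbs (ham G β h) x * f x ≤ sSup (mcVals G P Λ f) :=
  gibbs_marginal_mem_LPmc_general G β h P hP hstat Λ

end GibbsLP
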